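/- arXiv:2105.07094 — 3 statements merged into one kernel-verified Lean document; each statement's English description precedes it below -/
import Mathlib

section
/- Let P(z) = z^n + ... be a monic polynomial of degree n ≥ 1 and F ⊂ ℂ a nondegenerate compact set. Then the logarithmic capacity of the preimage E = {z ∈ ℂ : P(z) ∈ F} satisfies cap(E) = cap(F)^(1/n). -/
open MeasureTheory Filter Set Polynomial

/-- The `n`-th Chebyshev number: the infimum of sup-norms on `E` of monic
polynomials of degree `n`. -/
noncomputable def chebNumber (E : Set ℂ) (n : ℕ) : ℝ :=
  sInf { r | ∃ P : Polynomial ℂ, P.Monic ∧ P.natDegree = n ∧ ∀ z ∈ E, ‖P.eval z‖ ≤ r }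

/-- Logarithmic capacity (for compact sets), via the Chebyshev constant. -/
noncomputable def logCap (E : Set ℂ) : ℝ :=
  ⨅ n : ℕ, (chebNumber E (n + 1)) ^ ((1 : ℝ) / (n + 1))

namespace CapAux

open Bornology

def chebSet (E : Set ℂ) (n : ℕ) : Set ℝ :=
  { r | ∃ P : Polynomial ℂ, P.Monic ∧ P.natDegree = n ∧ ∀ z ∈ E, ‖P.eval z‖ ≤ r }

lemma chebNumber_eq (E : Set ℂ) (n : ℕ) : chebNumber E n = sInf (chebSet E n) := rfl

lemma chebSet_nonneg {E : Set ℂ} (hE : E.Nonempty) {n : ℕ} {r : ℝ} (hr : r ∈ chebSet E n) :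
    0 ≤ r := by
  obtain ⟨z, hz⟩ := hE
  obtain ⟨Q, _, _, hQ⟩ := hr
  exact (norm_nonneg _).trans (hQ z hz)

lemma chebSet_bddBelow {E : Set ℂ} (hE : E.Nonempty) (n : ℕ) : BddBelow (chebSet E n) :=
  ⟨0, fun _ hr => chebSet_nonneg hE hr⟩

lemma chebSet_nonempty {E : Set ℂ} (hE : IsCompact E) (n : ℕ) : (chebSet E n).Nonempty := by
  obtain ⟨r, hr⟩ := (hE.image ((X ^ n : Polynomial ℂ).continuous.norm)).bddAbove
  refine ⟨max r 0, X ^ n, monic_X_pow n, natDegree_X_pow n, fun z hz => ?_⟩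
  exact le_trans (hr ⟨z, hz, rfl⟩) (le_max_left _ _)

lemma chebNumber_nonneg {E : Set ℂ} (hE : E.Nonempty) (n : ℕ) : 0 ≤ chebNumber E n :=
  Real.sInf_nonneg fun _ hr => chebSet_nonneg hE hr

variable {P : Polynomial ℂ} {n : ℕ} {F : Set ℂ}

lemma degree_pos (hn : 1 ≤ n) (hdeg : P.natDegree = n) : 0 < P.degree :=
  natDegree_pos_iff_degree_pos.1 (by omega)

lemma preimage_isCompact (hn : 1 ≤ n) (hdeg : P.natDegree = n)
    (hF : IsCompact F) : IsCompact {z : ℂ | P.eval z ∈ F} := by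
  have hclosed : IsClosed {z : ℂ | P.eval z ∈ F} :=
    hF.isClosed.preimage P.continuous
  obtain ⟨C, hC⟩ := hF.isBounded.exists_norm_le
  have htd : Tendsto (fun z : ℂ => ‖P.eval z‖) (cobounded ℂ) atTop :=
    P.tendsto_norm_atTop (degree_pos hn hdeg) tendsto_norm_cobounded_atTop
  have hev : ∀ᶠ z : ℂ in cobounded ℂ, C + 1 ≤ ‖P.eval z‖ := htd.eventually_ge_atTop _
  have hbdd : IsBounded {z : ℂ | P.eval z ∈ F} := by
    have : IsBounded {z : ℂ | C + 1 ≤ ‖P.eval z‖}ᶜ := isBounded_compl_iff.2 hev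
    refine this.subset fun z hz => ?_
    simp only [mem_compl_iff, mem_setOf_eq, not_le]
    exact lt_of_le_of_lt (hC _ hz) (by linarith)
  exact Metric.isCompact_of_isClosed_isBounded hclosed hbdd

lemma preimage_nonempty (hn : 1 ≤ n) (hdeg : P.natDegree = n)
    (hFne : F.Nonempty) : {z : ℂ | P.eval z ∈ F}.Nonempty := by
  obtain ⟨w, hw⟩ := hFne
  have hdeg' : 0 < (P - C w).degree := by
    rw [degree_sub_C (degree_pos hn hdeg)]
    exact degree_pos hn hdeg
  obtain ⟨z, hz⟩ := Complex.exists_root hdeg'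
  refine ⟨z, ?_⟩
  have : P.eval z - w = 0 := by simpa [IsRoot] using hz
  simp only [mem_setOf_eq]
  rw [sub_eq_zero] at this
  rw [this]; exact hw

lemma comp_mem {k : ℕ} {r : ℝ} (hP : P.Monic) (hn : 1 ≤ n) (hdeg : P.natDegree = n)
    (hr : r ∈ chebSet F k) : r ∈ chebSet {z : ℂ | P.eval z ∈ F} (k * n) := by
  obtain ⟨Q, hQm, hQd, hQb⟩ := hr
  refine ⟨Q.comp P, hQm.comp hP (by omega), by rw [natDegree_comp, hQd, hdeg], fun z hz => ?_⟩
  rw [eval_comp]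
  exact hQb _ hz

lemma pow_mem {m : ℕ} {r : ℝ} (hP : P.Monic) (hn : 1 ≤ n) (hdeg : P.natDegree = n)
    (hr0 : 0 ≤ r) (hr : r ∈ chebSet {z : ℂ | P.eval z ∈ F} m) : r ^ n ∈ chebSet F m := by
  obtain ⟨Q, hQm, hQd, hQb⟩ := hr
  have hQsplits := IsAlgClosed.splits Q
  have hQcard : Multiset.card Q.roots = m := by
    rw [← hQd]; exact (splits_iff_card_roots.1 hQsplits)
  have hsub : ∀ a b : ℂ, ‖a - b‖₊ = ‖b - a‖₊ := fun a b => by rw [← neg_sub, nnnorm_neg]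
  have pcong : ∀ {α : Type} [inst : CommMonoid α], ∀ {t : Multiset ℂ} {f g : ℂ → α},
      (∀ x ∈ t, f x = g x) → (t.map f).prod = (t.map g).prod :=
    fun h => by rw [Multiset.map_congr rfl h]
  have hnnp : ∀ (t : Multiset ℂ), ‖t.prod‖₊ = (t.map fun x => ‖x‖₊).prod := fun t =>
    map_multiset_prod (nnnormHom.toMonoidHom : ℂ →* NNReal) t
  refine ⟨(Q.roots.map fun q => X - C (P.eval q)).prod, ?_, ?_, ?_⟩
  · exact monic_multiset_prod_of_monic _ _ fun q _ => monic_X_sub_C _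
  · rw [natDegree_multiset_prod_of_monic]
    · simp [Multiset.map_map, Function.comp, natDegree_X_sub_C, hQcard]
    · intro f hf
      obtain ⟨q, _, rfl⟩ := Multiset.mem_map.1 hf
      exact monic_X_sub_C _
  · intro w hw
    have hmon : (P - C w).Monic := hP.sub_of_left (lt_of_le_of_lt (degree_C_le)
      (natDegree_pos_iff_degree_pos.1 (by omega)))
    set R : Multiset ℂ := (P - C w).roots with hR
    have hPsplits := IsAlgClosed.splits (P - C w)
    have hRcard : Multiset.card R = n := by
      rw [hR, splits_iff_card_roots.1 hPsplits, natDegree_sub_C, hdeg]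
    have hPfact : P - C w = (R.map fun z => X - C z).prod :=
      hPsplits.eq_prod_roots_of_monic hmon
    have hQfact : Q = (Q.roots.map fun q => X - C q).prod :=
      hQsplits.eq_prod_roots_of_monic hQm
    have hRmem : ∀ z ∈ R, ‖Q.eval z‖₊ ≤ r.toNNReal := by
      intro z hz
      have : P.eval z - w = 0 := by
        have h0 := isRoot_of_mem_roots (hR ▸ hz)
        rw [IsRoot, eval_sub, eval_C] at h0
        exact h0
      have hzE : z ∈ {z : ℂ | P.eval z ∈ F} := by
        simp only [mem_setOf_eq, sub_eq_zero.1 this]; exact hw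
      have := hQb z hzE
      rw [← Real.toNNReal_coe (r := ‖Q.eval z‖₊)]
      exact Real.toNNReal_mono (by simpa using this)
    have key : ‖((Q.roots.map fun q => X - C (P.eval q)).prod).eval w‖₊
        = (R.map fun z => ‖Q.eval z‖₊).prod := by
      rw [eval_multiset_prod]
      rw [Multiset.map_map]
      have h1 : ∀ q : ℂ, ((eval w) ∘ fun q => X - C (P.eval q)) q = w - P.eval q := by
        intro q; simp
      rw [show (Q.roots.map ((eval w) ∘ fun q => X - C (P.eval q)))
            = Q.roots.map fun q => w - P.eval q from Multiset.map_congr rfl fun q _ => h1 q]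
      rw [hnnp, Multiset.map_map]
      have h2 : ∀ q : ℂ, ‖w - P.eval q‖₊ = (R.map fun z => ‖q - z‖₊).prod := by
        intro q
        have : P.eval q - w = (R.map fun z => q - z).prod := by
          conv_lhs => rw [show P.eval q - w = (P - C w).eval q by simp, hPfact]
          rw [eval_multiset_prod, Multiset.map_map]
          exact pcong fun z _ => by simp
        rw [hsub, this, hnnp, Multiset.map_map]
        rfl
      calc (Q.roots.map ((fun z : ℂ => ‖z‖₊) ∘ fun q => w - P.eval q)).prod
          = (Q.roots.map fun q => (R.map fun z => ‖q - z‖₊).prod).prod :=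
            pcong fun q _ => h2 q
        _ = (R.map fun z => (Q.roots.map fun q => ‖q - z‖₊).prod).prod :=
            Multiset.prod_map_prod_map Q.roots R
        _ = (R.map fun z => ‖Q.eval z‖₊).prod := by
            refine pcong fun z _ => ?_
            conv_rhs => rw [hQfact]
            rw [eval_multiset_prod, hnnp, Multiset.map_map, Multiset.map_map]
            refine pcong fun q _ => ?_
            simpa using hsub q z
    have hle : (R.map fun z => ‖Q.eval z‖₊).prod ≤ r.toNNReal ^ n := by
      have := Multiset.prod_le_pow_card (R.map fun z => ‖Q.eval z‖₊) r.toNNReal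
        (fun x hx => by
          obtain ⟨z, hz, rfl⟩ := Multiset.mem_map.1 hx
          exact hRmem z hz)
      simpa [hRcard] using this
    have : (‖((Q.roots.map fun q => X - C (P.eval q)).prod).eval w‖₊ : ℝ) ≤ r ^ n := by
      rw [key]
      calc ((R.map fun z => ‖Q.eval z‖₊).prod : ℝ) ≤ ((r.toNNReal ^ n : NNReal) : ℝ) := by
            exact_mod_cast hle
        _ = r ^ n := by rw [NNReal.coe_pow, Real.coe_toNNReal _ hr0]
    simpa using this

lemma maxpow_mono (n : ℕ) : Monotone (fun x : ℝ => max x 0 ^ n) := fun _ _ h =>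
  pow_le_pow_left₀ (le_max_right _ _) (max_le_max h le_rfl) n

lemma maxpow_cont (n : ℕ) : Continuous (fun x : ℝ => max x 0 ^ n) :=
  (continuous_id.max continuous_const).pow n

lemma maxrpow_mono {c : ℝ} (hc : 0 ≤ c) : Monotone (fun x : ℝ => max x 0 ^ c) := fun _ _ h =>
  Real.rpow_le_rpow (le_max_right _ _) (max_le_max h le_rfl) hc

lemma maxrpow_contAt {c : ℝ} (hc : 0 ≤ c) (t : ℝ) :
    ContinuousAt (fun x : ℝ => max x 0 ^ c) t :=
  (Real.continuousAt_rpow_const _ _ (Or.inr hc)).comp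
    ((continuous_id.max continuous_const).continuousAt)

end CapAux

open CapAux in
/-- For a monic polynomial `P` of degree `n ≥ 1` and a nondegenerate compact set
`F ⊆ ℂ`, the capacity of the preimage `E = P⁻¹(F)` equals `cap(F)^(1/n)`. -/
theorem cap_preimage_monic_polynomial (P : Polynomial ℂ) (hP : P.Monic)
    (n : ℕ) (hn : 1 ≤ n) (hdeg : P.natDegree = n)
    (F : Set ℂ) (hF : IsCompact F) (hF0 : 0 < logCap F) :
    logCap {z : ℂ | P.eval z ∈ F} = logCap F ^ ((1 : ℝ) / n) := by
  set E : Set ℂ := {z : ℂ | P.eval z ∈ F} with hE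
  have hnR : (0:ℝ) < n := by exact_mod_cast hn
  -- F is nonempty
  have hFne : F.Nonempty := by
    by_contra h
    rw [not_nonempty_iff_eq_empty] at h
    subst h
    have hcheb : ∀ k : ℕ, chebNumber (∅ : Set ℂ) (k + 1) = 0 := by
      intro k
      rw [chebNumber_eq]
      have huniv : chebSet (∅ : Set ℂ) (k + 1) = univ :=
        eq_univ_of_forall fun r => ⟨X ^ (k + 1), monic_X_pow _, natDegree_X_pow _,
          fun z hz => absurd hz (notMem_empty z)⟩
      rw [huniv]
      refine Real.sInf_of_not_bddBelow ?_
      rintro ⟨b, hb⟩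
      have := hb (mem_univ (b - 1))
      linarith
    have hzero : logCap (∅ : Set ℂ) = 0 := by
      unfold logCap
      have : ∀ k : ℕ, chebNumber (∅ : Set ℂ) (k + 1) ^ ((1:ℝ)/(k+1)) = 0 := by
        intro k
        rw [hcheb k]
        exact Real.zero_rpow (by positivity)
      simp only [this]
      exact ciInf_const
    rw [hzero] at hF0
    exact lt_irrefl _ hF0
  have hEc : IsCompact E := preimage_isCompact hn hdeg hF
  have hEne : E.Nonempty := preimage_nonempty hn hdeg hFne
  have hcEnn : ∀ k : ℕ, 0 ≤ chebNumber E (k + 1) := fun k => chebNumber_nonneg hEne _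
  have hcFnn : ∀ k : ℕ, 0 ≤ chebNumber F (k + 1) := fun k => chebNumber_nonneg hFne _
  have hbddE : BddBelow (range fun k : ℕ => chebNumber E (k + 1) ^ ((1:ℝ)/(k+1))) :=
    ⟨0, by rintro x ⟨k, rfl⟩; exact Real.rpow_nonneg (hcEnn k) _⟩
  have hbddF : BddBelow (range fun k : ℕ => chebNumber F (k + 1) ^ ((1:ℝ)/(k+1))) :=
    ⟨0, by rintro x ⟨k, rfl⟩; exact Real.rpow_nonneg (hcFnn k) _⟩
  have hlogE0 : 0 ≤ logCap E := le_ciInf fun k => Real.rpow_nonneg (hcEnn k) _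
  -- Step 1 : logCap E ≤ logCap F ^ (1/n)
  have step1 : logCap E ≤ logCap F ^ ((1:ℝ)/n) := by
    have h1 : ∀ k : ℕ, logCap E ≤ (chebNumber F (k + 1) ^ ((1:ℝ)/(k+1))) ^ ((1:ℝ)/n) := by
      intro k
      have hle : chebNumber E ((k + 1) * n) ≤ chebNumber F (k + 1) := by
        rw [chebNumber_eq, chebNumber_eq]
        exact csInf_le_csInf (chebSet_bddBelow hEne _) (chebSet_nonempty hF _)
          fun r hr => comp_mem hP hn hdeg hr
      have hpos : 1 ≤ (k + 1) * n := Nat.one_le_iff_ne_zero.2 (by positivity)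
      obtain ⟨j, hj⟩ : ∃ j : ℕ, j + 1 = (k + 1) * n := ⟨(k + 1) * n - 1, by omega⟩
      have hjr : ((j:ℝ) + 1) = ((k:ℝ) + 1) * n := by
        have h' : ((j + 1 : ℕ) : ℝ) = (((k + 1) * n : ℕ) : ℝ) := by rw [hj]
        push_cast at h'
        linarith
      calc logCap E ≤ chebNumber E (j + 1) ^ ((1:ℝ)/(j+1)) := ciInf_le hbddE j
        _ = chebNumber E ((k + 1) * n) ^ ((1:ℝ)/(((k:ℝ)+1) * n)) := by rw [hj, hjr]
        _ ≤ chebNumber F (k + 1) ^ ((1:ℝ)/(((k:ℝ)+1) * n)) :=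
            Real.rpow_le_rpow (chebNumber_nonneg hEne _) hle (by positivity)
        _ = (chebNumber F (k + 1) ^ ((1:ℝ)/(k+1))) ^ ((1:ℝ)/n) := by
            rw [← Real.rpow_mul (hcFnn k)]
            congr 1
            field_simp
    refine (le_ciInf h1).trans_eq ?_
    have h3 := Monotone.map_ciInf_of_continuousAt
      (f := fun x : ℝ => max x 0 ^ ((1:ℝ)/n))
      (g := fun k : ℕ => chebNumber F (k + 1) ^ ((1:ℝ)/(k+1)))
      (maxrpow_contAt (by positivity) _) (maxrpow_mono (by positivity)) hbddF
    have h4 : ∀ k : ℕ, (fun x : ℝ => max x 0 ^ ((1:ℝ)/n)) (chebNumber F (k + 1) ^ ((1:ℝ)/(k+1)))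
        = (chebNumber F (k + 1) ^ ((1:ℝ)/(k+1))) ^ ((1:ℝ)/n) := by
      intro k
      simp only [max_eq_left (Real.rpow_nonneg (hcFnn k) _)]
    calc ⨅ k : ℕ, (chebNumber F (k + 1) ^ ((1:ℝ)/(k+1))) ^ ((1:ℝ)/n)
        = ⨅ k : ℕ, (fun x : ℝ => max x 0 ^ ((1:ℝ)/n)) (chebNumber F (k + 1) ^ ((1:ℝ)/(k+1))) :=
          iInf_congr fun k => (h4 k).symm
      _ = (fun x : ℝ => max x 0 ^ ((1:ℝ)/n)) (logCap F) := h3.symm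
      _ = logCap F ^ ((1:ℝ)/n) := by simp only [max_eq_left hF0.le]
  -- Step 2 : logCap F ≤ logCap E ^ n
  have step2 : logCap F ≤ logCap E ^ n := by
    have h1 : ∀ m : ℕ, chebNumber F (m + 1) ≤ chebNumber E (m + 1) ^ n := by
      intro m
      have himg : (fun x : ℝ => max x 0 ^ n) '' chebSet E (m + 1) ⊆ chebSet F (m + 1) := by
        rintro _ ⟨r, hr, rfl⟩
        have hr0 : 0 ≤ r := chebSet_nonneg hEne hr
        simpa [max_eq_left hr0] using pow_mem hP hn hdeg hr0 hr
      have hmap := Monotone.map_csInf_of_continuousAt (f := fun x : ℝ => max x 0 ^ n)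
        ((maxpow_cont n).continuousAt) (maxpow_mono n)
        (chebSet_nonempty hEc (m + 1)) (chebSet_bddBelow hEne (m + 1))
      rw [chebNumber_eq, chebNumber_eq]
      calc sInf (chebSet F (m + 1))
          ≤ sInf ((fun x : ℝ => max x 0 ^ n) '' chebSet E (m + 1)) :=
            csInf_le_csInf (chebSet_bddBelow hFne _) ((chebSet_nonempty hEc _).image _) himg
        _ = max (sInf (chebSet E (m + 1))) 0 ^ n := hmap.symm
        _ = sInf (chebSet E (m + 1)) ^ n := by
            rw [max_eq_left (α := ℝ)]
            exact chebNumber_nonneg hEne (m + 1)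
    have h2 : ∀ m : ℕ, chebNumber F (m + 1) ^ ((1:ℝ)/(m+1))
        ≤ (chebNumber E (m + 1) ^ ((1:ℝ)/(m+1))) ^ n := by
      intro m
      calc chebNumber F (m + 1) ^ ((1:ℝ)/(m+1))
          ≤ (chebNumber E (m + 1) ^ n) ^ ((1:ℝ)/(m+1)) :=
            Real.rpow_le_rpow (hcFnn m) (h1 m) (by positivity)
        _ = (chebNumber E (m + 1) ^ ((1:ℝ)/(m+1))) ^ n := by
            rw [← Real.rpow_natCast (chebNumber E (m + 1)) n,
              ← Real.rpow_natCast (chebNumber E (m + 1) ^ ((1:ℝ)/(m+1))) n,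
              ← Real.rpow_mul (hcEnn m), ← Real.rpow_mul (hcEnn m), mul_comm]
    have h3 : logCap F ≤ ⨅ m : ℕ, (chebNumber E (m + 1) ^ ((1:ℝ)/(m+1))) ^ n :=
      le_ciInf fun m => (ciInf_le hbddF m).trans (h2 m)
    refine h3.trans_eq ?_
    have h5 := Monotone.map_ciInf_of_continuousAt (f := fun x : ℝ => max x 0 ^ n)
      (g := fun k : ℕ => chebNumber E (k + 1) ^ ((1:ℝ)/(k+1)))
      ((maxpow_cont n).continuousAt) (maxpow_mono n) hbddE
    calc ⨅ m : ℕ, (chebNumber E (m + 1) ^ ((1:ℝ)/(m+1))) ^ n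
        = ⨅ m : ℕ, (fun x : ℝ => max x 0 ^ n) (chebNumber E (m + 1) ^ ((1:ℝ)/(m+1))) :=
          iInf_congr fun m => by
            simp only [max_eq_left (Real.rpow_nonneg (hcEnn m) _)]
      _ = (fun x : ℝ => max x 0 ^ n) (logCap E) := h5.symm
      _ = logCap E ^ n := by simp only [max_eq_left hlogE0]
  -- Combine
  have hfinal : logCap F ^ ((1:ℝ)/n) ≤ logCap E := by
    have h := Real.rpow_le_rpow hF0.le step2 (by positivity : (0:ℝ) ≤ 1/n)
    rwa [← Real.rpow_natCast (logCap E) n, ← Real.rpow_mul hlogE0, mul_one_div,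
      div_self hnR.ne', Real.rpow_one] at h
  exact le_antisymm step1 hfinal
end

section
/- For any monic polynomial P of degree n ≥ 1 and any ρ > 0, the set {z ∈ ℂ : |P(z)| ≤ ρ^n} has logarithmic capacity exactly ρ. -/
open MeasureTheory Filter Set Polynomial

lemma norm_multiset_prod' (s : Multiset ℂ) : ‖s.prod‖ = (s.map (fun x => ‖x‖)).prod :=
  map_multiset_prod (normHom : ℂ →*₀ ℝ) s

lemma exists_on_disk (S : Polynomial ℂ) (hS : S.Monic) (r : ℝ) (hr : 0 ≤ r) :
    ∃ w : ℂ, ‖w‖ ≤ r ∧ r ^ S.natDegree ≤ ‖S.eval w‖ := by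
  set d := S.natDegree with hd
  set m := d + 1 with hm
  have hm0 : (m : ℕ) ≠ 0 := Nat.succ_ne_zero d
  set ζ : ℂ := Complex.exp (2 * Real.pi * Complex.I / m) with hζ
  have hprim : IsPrimitiveRoot ζ m := Complex.isPrimitiveRoot_exp m hm0
  have habsζ : ‖ζ‖ = 1 := by
    rw [hζ, show (2 * Real.pi * Complex.I / m) = ((2 * Real.pi / m : ℝ) : ℂ) * Complex.I by
      push_cast; ring]
    exact Complex.norm_exp_ofReal_mul_I _
  have key : ∑ k ∈ Finset.range m, ζ ^ k * S.eval ((r : ℂ) * ζ ^ k) = (m : ℂ) * (r : ℂ) ^ d := by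
    have heval : ∀ x : ℂ, S.eval x = ∑ j ∈ Finset.range m, S.coeff j * x ^ j := fun x =>
      S.eval_eq_sum_range' (Nat.lt_succ_self d) x
    calc ∑ k ∈ Finset.range m, ζ ^ k * S.eval ((r : ℂ) * ζ ^ k)
        = ∑ k ∈ Finset.range m, ∑ j ∈ Finset.range m,
            S.coeff j * (r : ℂ) ^ j * (ζ ^ (j + 1)) ^ k := by
          refine Finset.sum_congr rfl fun k _ => ?_
          rw [heval, Finset.mul_sum]
          refine Finset.sum_congr rfl fun j _ => ?_
          rw [mul_pow, ← pow_mul, ← pow_mul, mul_comm (j+1) k, Nat.mul_succ, pow_add]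
          ring
      _ = ∑ j ∈ Finset.range m, S.coeff j * (r : ℂ) ^ j * ∑ k ∈ Finset.range m, (ζ ^ (j + 1)) ^ k := by
          rw [Finset.sum_comm]
          exact Finset.sum_congr rfl fun j _ => by rw [Finset.mul_sum]
      _ = (m : ℂ) * (r : ℂ) ^ d := by
          rw [Finset.sum_eq_single d]
          · rw [hprim.pow_eq_one]
            simp [hS.coeff_natDegree, ← hd, show S.coeff d = 1 from hS.coeff_natDegree]
            ring
          · intro j hj hjd
            have hj' : j + 1 < m := by
              have := Finset.mem_range.mp hj
              omega
            have hne : ζ ^ (j + 1) ≠ 1 := hprim.pow_ne_one_of_pos_of_lt (Nat.succ_ne_zero j) hj'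
            rw [geom_sum_eq hne, ← pow_mul, mul_comm (j+1) m, pow_mul, hprim.pow_eq_one]
            simp
          · intro h
            exact absurd (Finset.self_mem_range_succ d) h
  have hub : (m : ℝ) * r ^ d ≤ ∑ k ∈ Finset.range m, ‖S.eval ((r : ℂ) * ζ ^ k)‖ := by
    have h1 : ‖∑ k ∈ Finset.range m, ζ ^ k * S.eval ((r : ℂ) * ζ ^ k)‖
        = (m : ℝ) * r ^ d := by
      rw [key, norm_mul, norm_pow, Complex.norm_natCast, Complex.norm_real, Real.norm_eq_abs, abs_of_nonneg hr]
    calc (m : ℝ) * r ^ d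
        = ‖∑ k ∈ Finset.range m, ζ ^ k * S.eval ((r : ℂ) * ζ ^ k)‖ := h1.symm
      _ ≤ ∑ k ∈ Finset.range m, ‖ζ ^ k * S.eval ((r : ℂ) * ζ ^ k)‖ :=
          norm_sum_le _ _
      _ = ∑ k ∈ Finset.range m, ‖S.eval ((r : ℂ) * ζ ^ k)‖ := by
          refine Finset.sum_congr rfl fun k _ => ?_
          rw [norm_mul, norm_pow, habsζ, one_pow, one_mul]
  obtain ⟨k, -, hk⟩ := Finset.exists_le_of_sum_le (f := fun _ => r ^ d)
    (g := fun k => ‖S.eval ((r : ℂ) * ζ ^ k)‖)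
    (Finset.nonempty_range_iff.mpr hm0)
    (by rw [Finset.sum_const, Finset.card_range, nsmul_eq_mul]; exact hub)
  refine ⟨(r : ℂ) * ζ ^ k, ?_, hk⟩
  rw [norm_mul, norm_pow, habsζ, one_pow, mul_one, Complex.norm_real, Real.norm_eq_abs, abs_of_nonneg hr]

lemma multiset_prod_le_pow {Z : Multiset ℂ} {f : ℂ → ℝ} {r : ℝ} (hr : 0 ≤ r)
    (h0 : ∀ z ∈ Z, 0 ≤ f z) (h : ∀ z ∈ Z, f z ≤ r) :
    (Z.map f).prod ≤ r ^ Multiset.card Z := by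
  induction Z using Multiset.induction with
  | empty => simp
  | cons a s ih =>
    simp only [Multiset.map_cons, Multiset.prod_cons, Multiset.card_cons, pow_succ]
    have hprod := ih (fun z hz => h0 z (Multiset.mem_cons_of_mem hz))
      (fun z hz => h z (Multiset.mem_cons_of_mem hz))
    have hfa : f a ≤ r := h a (Multiset.mem_cons_self a s)
    have hnn : 0 ≤ (s.map f).prod := Multiset.prod_nonneg (by
      intro x hx
      obtain ⟨z, hz, rfl⟩ := Multiset.mem_map.mp hx
      exact h0 z (Multiset.mem_cons_of_mem hz))
    calc f a * (s.map f).prod ≤ r * r ^ Multiset.card s :=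
        mul_le_mul hfa hprod hnn hr
      _ = r ^ Multiset.card s * r := mul_comm _ _

lemma cheb_lower (P : Polynomial ℂ) (hP : P.Monic) (n : ℕ) (hn : 1 ≤ n)
    (hdeg : P.natDegree = n) (ρ : ℝ) (hρ : 0 < ρ) (Q : Polynomial ℂ) (hQ : Q.Monic) (r : ℝ)
    (hr : ∀ z : ℂ, ‖P.eval z‖ ≤ ρ ^ n → ‖Q.eval z‖ ≤ r) :
    ρ ^ Q.natDegree ≤ r := by
  have hρn : (0:ℝ) ≤ ρ ^ n := (pow_pos hρ n).le
  -- r is nonnegative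
  obtain ⟨z₀, hz₀⟩ := Complex.exists_root (f := P) (by
    rw [degree_eq_natDegree hP.ne_zero, hdeg]; exact_mod_cast hn)
  have hz₀E : ‖P.eval z₀‖ ≤ ρ ^ n := by rw [hz₀]; simpa using hρn
  have hr0 : 0 ≤ r := le_trans (norm_nonneg _) (hr z₀ hz₀E)
  set d := Q.natDegree with hd
  set B := Q.roots with hB
  have hBcard : Multiset.card B = d :=
    (splits_iff_card_roots.mp (IsAlgClosed.splits Q))
  set S : Polynomial ℂ := (B.map (fun b => X - C (P.eval b))).prod with hS
  have hSmonic : S.Monic :=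
    monic_multiset_prod_of_monic _ _ (fun b _ => monic_X_sub_C _)
  have hSdeg : S.natDegree = d := by
    rw [hS, show B.map (fun b => X - C (P.eval b))
        = (B.map (fun b => P.eval b)).map (fun a => X - C a) by rw [Multiset.map_map]; rfl,
      natDegree_multiset_prod_X_sub_C_eq_card, Multiset.card_map, hBcard]
  obtain ⟨w, hw1, hw2⟩ := exists_on_disk S hSmonic (ρ ^ n) hρn
  rw [hSdeg] at hw2
  set T : Polynomial ℂ := P - C w with hT
  have hTmonic : T.Monic := by
    have : degree (-C w) < degree P := by
      rw [degree_neg, degree_eq_natDegree hP.ne_zero, hdeg]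
      exact lt_of_le_of_lt degree_C_le (by exact_mod_cast hn)
    simpa [hT, sub_eq_add_neg] using hP.add_of_left this
  have hTdeg : T.natDegree = n := by rw [hT, natDegree_sub_C, hdeg]
  set Z := T.roots with hZ
  have hZcard : Multiset.card Z = n := by
    rw [hZ, (splits_iff_card_roots.mp (IsAlgClosed.splits T)), hTdeg]
  have hZmem : ∀ z ∈ Z, ‖P.eval z‖ ≤ ρ ^ n := by
    intro z hz
    have := (mem_roots hTmonic.ne_zero).mp hz
    rw [IsRoot, hT, eval_sub, eval_C, sub_eq_zero] at this
    rw [this]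
    exact hw1
  -- |S.eval w| = ∏_{b ∈ B} |T.eval b|
  have hSw : ‖S.eval w‖ = (B.map (fun b => ‖T.eval b‖)).prod := by
    rw [hS, eval_multiset_prod, Multiset.map_map, norm_multiset_prod', Multiset.map_map]
    congr 1
    refine Multiset.map_congr rfl fun b _ => ?_
    simp only [Function.comp_apply, eval_sub, eval_X, eval_C, hT]
    rw [norm_sub_rev]
  -- ∏_{z ∈ Z} |Q.eval z| = ∏_{b ∈ B} |T.eval b|
  have hkey : (Z.map (fun z => ‖Q.eval z‖)).prod
      = (B.map (fun b => ‖T.eval b‖)).prod := by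
    have hQeq : Q = (B.map (fun b => X - C b)).prod :=
      ((IsAlgClosed.splits Q).eq_prod_roots_of_monic hQ)
    have hTeq : T = (Z.map (fun z => X - C z)).prod :=
      ((IsAlgClosed.splits T).eq_prod_roots_of_monic hTmonic)
    have h1 : ∀ z : ℂ, ‖Q.eval z‖
        = (B.map (fun b => ‖z - b‖)).prod := by
      intro z
      conv_lhs => rw [hQeq]
      rw [eval_multiset_prod, Multiset.map_map, norm_multiset_prod', Multiset.map_map]
      exact congrArg _ (Multiset.map_congr rfl fun b _ => by simp)
    have h2 : ∀ b : ℂ, ‖T.eval b‖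
        = (Z.map (fun z => ‖z - b‖)).prod := by
      intro b
      conv_lhs => rw [hTeq]
      rw [eval_multiset_prod, Multiset.map_map, norm_multiset_prod', Multiset.map_map]
      refine congrArg _ (Multiset.map_congr rfl fun z _ => ?_)
      simp only [Function.comp_apply, eval_sub, eval_X, eval_C]
      exact (norm_sub_rev _ _)
    calc (Z.map (fun z => ‖Q.eval z‖)).prod
        = (Z.map (fun z => (B.map (fun b => ‖z - b‖)).prod)).prod := by
          rw [Multiset.map_congr rfl fun z _ => h1 z]
      _ = (B.map (fun b => (Z.map (fun z => ‖z - b‖)).prod)).prod :=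
          Multiset.prod_map_prod_map Z B
      _ = (B.map (fun b => ‖T.eval b‖)).prod := by
          rw [Multiset.map_congr rfl fun b _ => (h2 b).symm]
  have hchain : (ρ ^ d) ^ n ≤ r ^ n := by
    calc (ρ ^ d) ^ n = (ρ ^ n) ^ d := by rw [← pow_mul, ← pow_mul, Nat.mul_comm]
      _ ≤ ‖S.eval w‖ := hw2
      _ = (Z.map (fun z => ‖Q.eval z‖)).prod := by rw [hSw, hkey]
      _ ≤ r ^ Multiset.card Z :=
          multiset_prod_le_pow hr0 (fun z _ => norm_nonneg _)
            (fun z hz => hr z (hZmem z hz))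
      _ = r ^ n := by rw [hZcard]
  exact (pow_le_pow_iff_left₀ (pow_nonneg hρ.le d) hr0 (by omega)).mp hchain

/-- For a monic polynomial `P` of degree `n ≥ 1` and `ρ > 0`, the set
`{z : |P(z)| ≤ ρ^n}` has logarithmic capacity exactly `ρ`. -/
theorem cap_sublevel_monic_polynomial (P : Polynomial ℂ) (hP : P.Monic)
    (n : ℕ) (hn : 1 ≤ n) (hdeg : P.natDegree = n) (ρ : ℝ) (hρ : 0 < ρ) :
    logCap {z : ℂ | ‖P.eval z‖ ≤ ρ ^ n} = ρ := by
  set E : Set ℂ := {z : ℂ | ‖P.eval z‖ ≤ ρ ^ n} with hE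
  have hρn : (0:ℝ) ≤ ρ ^ n := (pow_pos hρ n).le
  have hdegpos : 0 < P.degree := by
    rw [degree_eq_natDegree hP.ne_zero, hdeg]; exact_mod_cast hn
  -- E is nonempty
  obtain ⟨z₀, hz₀⟩ := Complex.exists_root hdegpos
  have hz₀E : z₀ ∈ E := by
    show ‖P.eval z₀‖ ≤ ρ ^ n
    rw [hz₀.eq_zero]
    simpa using hρn
  -- E is bounded
  obtain ⟨R, hR⟩ : ∃ R : ℝ, ∀ z ∈ E, ‖z‖ ≤ R := by
    have htend : Tendsto (fun z : ℂ => ‖P.eval z‖) (Bornology.cobounded ℂ) atTop :=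
      P.tendsto_norm_atTop hdegpos tendsto_norm_cobounded_atTop
    have hev : ∀ᶠ z : ℂ in Bornology.cobounded ℂ, ρ ^ n < ‖P.eval z‖ :=
      htend.eventually_gt_atTop (ρ ^ n)
    have hbd : Bornology.IsBounded {z : ℂ | ρ ^ n < ‖P.eval z‖}ᶜ :=
      Bornology.isBounded_compl_iff.mpr hev
    have hsub : E ⊆ {z : ℂ | ρ ^ n < ‖P.eval z‖}ᶜ := by
      intro z hz
      simp only [mem_compl_iff, mem_setOf_eq, not_lt]
      exact hz
    obtain ⟨C, hC⟩ := isBounded_iff_forall_norm_le.mp (hbd.subset hsub)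
    exact ⟨C, fun z hz => by exact hC z hz⟩
  have hR0 : 0 ≤ R := le_trans (norm_nonneg z₀) (hR z₀ hz₀E)
  -- chebyshev sets are nonempty and bounded below by 0
  have hmem : ∀ m : ℕ, (R ^ m) ∈
      { r | ∃ Q : Polynomial ℂ, Q.Monic ∧ Q.natDegree = m ∧ ∀ z ∈ E, ‖Q.eval z‖ ≤ r } := by
    intro m
    refine ⟨X ^ m, monic_X_pow m, natDegree_X_pow m, fun z hz => ?_⟩
    rw [eval_pow, eval_X, norm_pow]
    exact pow_le_pow_left₀ (norm_nonneg z) (hR z hz) m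
  have hlb : ∀ m : ℕ, ∀ r ∈
      { r | ∃ Q : Polynomial ℂ, Q.Monic ∧ Q.natDegree = m ∧ ∀ z ∈ E, ‖Q.eval z‖ ≤ r },
      ρ ^ m ≤ r := by
    rintro m r ⟨Q, hQm, hQd, hQr⟩
    rw [← hQd]
    exact cheb_lower P hP n hn hdeg ρ hρ Q hQm r (fun z hz => hQr z hz)
  have hcheb_lb : ∀ m : ℕ, ρ ^ m ≤ chebNumber E m := fun m =>
    le_csInf ⟨R ^ m, hmem m⟩ (hlb m)
  have hcheb_nonneg : ∀ m : ℕ, 0 ≤ chebNumber E m := fun m =>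
    le_trans (pow_nonneg hρ.le m) (hcheb_lb m)
  have hcheb_ub : chebNumber E n ≤ ρ ^ n :=
    csInf_le ⟨0, fun r ⟨Q, hQm, hQd, hQr⟩ =>
        le_trans (norm_nonneg _) (hQr z₀ hz₀E)⟩
      ⟨P, hP, hdeg, fun z hz => hz⟩
  -- now compute logCap
  have hbdd : BddBelow (Set.range fun m : ℕ => (chebNumber E (m + 1)) ^ ((1 : ℝ) / (m + 1))) := by
    refine ⟨0, ?_⟩
    rintro x ⟨m, rfl⟩
    exact Real.rpow_nonneg (hcheb_nonneg (m + 1)) _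
  have hcast : ∀ m : ℕ, ((m : ℝ) + 1) ≠ 0 := fun m => by positivity
  have hrpow_pow : ∀ m : ℕ, (ρ ^ (m + 1) : ℝ) ^ ((1 : ℝ) / (m + 1)) = ρ := by
    intro m
    rw [← Real.rpow_natCast ρ (m + 1), ← Real.rpow_mul hρ.le]
    push_cast
    rw [mul_one_div, div_self (hcast m), Real.rpow_one]
  refine le_antisymm ?_ ?_
  · -- logCap ≤ ρ, using the term m = n - 1
    have h1 : logCap E ≤ (chebNumber E ((n - 1) + 1)) ^ ((1 : ℝ) / ((n - 1 : ℕ) + 1)) :=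
      ciInf_le hbdd (n - 1)
    have h2 : (n - 1) + 1 = n := Nat.succ_pred_eq_of_pos hn
    rw [h2] at h1
    refine h1.trans ?_
    have h3 : (chebNumber E n) ^ ((1 : ℝ) / ((n - 1 : ℕ) + 1))
        ≤ (ρ ^ n) ^ ((1 : ℝ) / ((n - 1 : ℕ) + 1)) :=
      Real.rpow_le_rpow (hcheb_nonneg n) hcheb_ub (by positivity)
    refine h3.trans_eq ?_
    have : ((n - 1 : ℕ) : ℝ) + 1 = (n : ℝ) := by
      exact_mod_cast congrArg (Nat.cast : ℕ → ℝ) h2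
    rw [show ((1 : ℝ) / ((n - 1 : ℕ) + 1)) = (1 : ℝ) / n by rw [this]]
    rw [← Real.rpow_natCast ρ n, ← Real.rpow_mul hρ.le, mul_one_div,
      div_self (by positivity : (n : ℝ) ≠ 0), Real.rpow_one]
  · -- ρ ≤ logCap
    refine le_ciInf fun m => ?_
    have h1 : (ρ ^ (m + 1) : ℝ) ^ ((1 : ℝ) / (m + 1))
        ≤ (chebNumber E (m + 1)) ^ ((1 : ℝ) / (m + 1)) :=
      Real.rpow_le_rpow (pow_nonneg hρ.le _) (hcheb_lb (m + 1)) (by positivity)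
    rw [hrpow_pow m] at h1
    exact h1
end

section
/- Let K ⊂ ℂ be compact, {x_k} and {x_{n,k}} points in K with |x_k − x_{n,k}| ≤ q^{n²} for all 1 ≤ k ≤ n and all n, where 0 < q < 1. Set P_n(z) = ∏_{k=1}^n (z − x_{n,k}) and Q_n(z) = ∏_{k=1}^n (z − x_k). If (1/n) log|Q_n(z)| → −V^μ(z) uniformly on compact subsets of ℂ∖K for a measure μ on K, then also (1/n) log|P_n(z)| → −V^μ(z) uniformly on compact subsets of ℂ∖K. -/
open Filter Set Finset

lemma log_sub_log_le_aux {a b d : ℝ} (hd : 0 < d) (ha : d ≤ a) (hb : d ≤ b) :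
    |Real.log a - Real.log b| ≤ |a - b| / d := by
  wlog h : b ≤ a generalizing a b
  · rw [abs_sub_comm (Real.log a), abs_sub_comm a b]
    exact this hb ha (le_of_not_ge h)
  have hb0 : 0 < b := hd.trans_le hb
  have ha0 : 0 < a := hd.trans_le ha
  have hlog : Real.log b ≤ Real.log a := Real.log_le_log hb0 h
  rw [abs_of_nonneg (sub_nonneg.2 hlog), abs_of_nonneg (sub_nonneg.2 h)]
  have h1 : Real.log a - Real.log b = Real.log (a / b) :=
    (Real.log_div ha0.ne' hb0.ne').symm
  have h2 : Real.log (a / b) ≤ a / b - 1 :=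
    Real.log_le_sub_one_of_pos (div_pos ha0 hb0)
  have h3 : a / b - 1 = (a - b) / b := by field_simp
  have h4 : (a - b) / b ≤ (a - b) / d :=
    div_le_div_of_nonneg_left (sub_nonneg.2 h) hd hb |>.trans_eq rfl
  -- careful: need div_le_div_of_le_left variant
  calc Real.log a - Real.log b = Real.log (a / b) := h1
    _ ≤ a / b - 1 := h2
    _ = (a - b) / b := h3
    _ ≤ (a - b) / d := by
        apply div_le_div_of_nonneg_left (sub_nonneg.2 h) hd hb
    _ = (a - b) / d := rfl

/-- If the zeros `x_{n,k}` of the monic polynomials `P_n` are `q^{n²}`-close to points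
`x_k`, and `(1/n) log |Q_n(z)| → −V^μ(z)` locally uniformly off the compact set `K`, where
`Q_n(z) = ∏_{k=1}^n (z − x_k)`, then also `(1/n) log |P_n(z)| → −V^μ(z)` locally uniformly
off `K`. -/
theorem perturbed_zero_products_same_limit
    (K : Set ℂ) (hK : IsCompact K) (q : ℝ) (hq : q ∈ Set.Ioo (0 : ℝ) 1)
    (x : ℕ → ℂ) (y : ℕ → ℕ → ℂ)
    (hx : ∀ k, x k ∈ K) (hy : ∀ n k, y n k ∈ K)
    (hclose : ∀ n k, 1 ≤ k → k ≤ n → ‖x k - y n k‖ ≤ q ^ (n ^ 2))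
    (V : ℂ → ℝ)
    (hQ : ∀ C : Set ℂ, IsCompact C → C ⊆ Kᶜ →
      TendstoUniformlyOn
        (fun n z => ((1 : ℝ) / n) *
          Real.log (‖∏ k ∈ Finset.Icc 1 n, (z - x k)‖))
        (fun z => -V z) atTop C) :
    ∀ C : Set ℂ, IsCompact C → C ⊆ Kᶜ →
      TendstoUniformlyOn
        (fun n z => ((1 : ℝ) / n) *
          Real.log (‖∏ k ∈ Finset.Icc 1 n, (z - y n k)‖))
        (fun z => -V z) atTop C := by
  intro C hC hCK
  rcases C.eq_empty_or_nonempty with rfl | hCne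
  · simp [TendstoUniformlyOn]
  have hKne : K.Nonempty := ⟨x 0, hx 0⟩
  obtain ⟨d, hd, hdist⟩ : ∃ d > 0, ∀ z ∈ C, ∀ w ∈ K, d ≤ ‖z - w‖ := by
    have hcont : ContinuousOn (fun z => Metric.infDist z K) C :=
      (Metric.continuous_infDist_pt K).continuousOn
    obtain ⟨z0, hz0C, hz0min⟩ := hC.exists_isMinOn hCne hcont
    refine ⟨Metric.infDist z0 K, ?_, ?_⟩
    · exact (hK.isClosed.notMem_iff_infDist_pos hKne).mp (hCK hz0C)
    · intro z hz w hw
      calc Metric.infDist z0 K ≤ Metric.infDist z K := hz0min hz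
        _ ≤ dist z w := Metric.infDist_le_dist_of_mem hw
        _ = ‖z - w‖ := Complex.dist_eq z w
  -- uniform bound on the difference
  have key : ∀ n : ℕ, ∀ z ∈ C,
      |((1 : ℝ) / n) * Real.log (‖∏ k ∈ Finset.Icc 1 n, (z - y n k)‖) -
        ((1 : ℝ) / n) * Real.log (‖∏ k ∈ Finset.Icc 1 n, (z - x k)‖)| ≤
      q ^ (n ^ 2) / d := by
    intro n z hz
    rcases Nat.eq_zero_or_pos n with rfl | hn
    · simp [le_div_iff₀ hd]
      positivity
    have hxne : ∀ k ∈ Finset.Icc 1 n, ‖z - x k‖ ≠ 0 :=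
      fun k _ => (hd.trans_le (hdist z hz _ (hx k))).ne'
    have hyne : ∀ k ∈ Finset.Icc 1 n, ‖z - y n k‖ ≠ 0 :=
      fun k _ => (hd.trans_le (hdist z hz _ (hy n k))).ne'
    have hpx : Real.log (‖∏ k ∈ Finset.Icc 1 n, (z - x k)‖) =
        ∑ k ∈ Finset.Icc 1 n, Real.log (‖z - x k‖) := by
      rw [norm_prod]
      exact Real.log_prod hxne
    have hpy : Real.log (‖∏ k ∈ Finset.Icc 1 n, (z - y n k)‖) =
        ∑ k ∈ Finset.Icc 1 n, Real.log (‖z - y n k‖) := by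
      rw [norm_prod]
      exact Real.log_prod hyne
    rw [hpx, hpy, ← mul_sub, ← Finset.sum_sub_distrib, abs_mul]
    have hterm : ∀ k ∈ Finset.Icc 1 n,
        |Real.log (‖z - y n k‖) - Real.log (‖z - x k‖)| ≤
          q ^ (n ^ 2) / d := by
      intro k hk
      rw [Finset.mem_Icc] at hk
      have h1 : |‖z - y n k‖ - ‖z - x k‖| ≤
          ‖x k - y n k‖ := by
        have := abs_norm_sub_norm_le (z - y n k) (z - x k)
        have he : (z - y n k) - (z - x k) = x k - y n k := by ring
        rwa [he] at this
      calc |Real.log (‖z - y n k‖) - Real.log (‖z - x k‖)| ≤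
          |‖z - y n k‖ - ‖z - x k‖| / d :=
            log_sub_log_le_aux hd (hdist z hz _ (hy n k)) (hdist z hz _ (hx k))
        _ ≤ ‖x k - y n k‖ / d := by gcongr
        _ ≤ q ^ (n ^ 2) / d := by gcongr; exact hclose n k hk.1 hk.2
    calc |(1 : ℝ) / n| * |∑ k ∈ Finset.Icc 1 n,
          (Real.log (‖z - y n k‖) - Real.log (‖z - x k‖))| ≤
        (1 / n) * ∑ k ∈ Finset.Icc 1 n, (q ^ (n ^ 2) / d) := by
          apply mul_le_mul
          · rw [abs_of_nonneg]; positivity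
          · exact (Finset.abs_sum_le_sum_abs _ _).trans (Finset.sum_le_sum hterm)
          · exact abs_nonneg _
          · positivity
      _ = (1 / n) * (n * (q ^ (n ^ 2) / d)) := by
          rw [Finset.sum_const, Nat.card_Icc]
          simp [nsmul_eq_mul]
      _ = q ^ (n ^ 2) / d := by
          field_simp
  -- tendsto of the bound
  have hbound : Tendsto (fun n : ℕ => q ^ (n ^ 2) / d) atTop (nhds 0) := by
    have h1 : Tendsto (fun n : ℕ => q ^ n) atTop (nhds 0) :=
      tendsto_pow_atTop_nhds_zero_of_lt_one hq.1.le hq.2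
    have h2 : Tendsto (fun n : ℕ => n ^ 2) atTop atTop :=
      tendsto_pow_atTop (by norm_num : (2:ℕ) ≠ 0)
    have := (h1.comp h2).div_const d
    simpa using this
  rw [Metric.tendstoUniformlyOn_iff] at *
  intro ε hε
  have hε2 : 0 < ε / 2 := half_pos hε
  have hq2 := hQ C hC hCK
  rw [Metric.tendstoUniformlyOn_iff] at hq2
  filter_upwards [hq2 (ε / 2) hε2, hbound.eventually (gt_mem_nhds hε2)] with n h1 h2
  intro z hz
  have := key n z hz
  calc dist (-V z) (((1 : ℝ) / n) *
        Real.log (‖∏ k ∈ Finset.Icc 1 n, (z - y n k)‖)) ≤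
      dist (-V z) (((1 : ℝ) / n) *
        Real.log (‖∏ k ∈ Finset.Icc 1 n, (z - x k)‖)) +
      dist (((1 : ℝ) / n) * Real.log (‖∏ k ∈ Finset.Icc 1 n, (z - x k)‖))
        (((1 : ℝ) / n) * Real.log (‖∏ k ∈ Finset.Icc 1 n, (z - y n k)‖)) :=
      dist_triangle _ _ _
    _ < ε / 2 + ε / 2 := by
        apply add_lt_add_of_lt_of_le (h1 z hz)
        rw [Real.dist_eq, abs_sub_comm]
        exact this.trans h2.le
    _ = ε := add_halves ε
end
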